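/- In the output-counting lower bound for sorting V/w records of size w ≥ B with memory M and block size B: any algorithm in which each record input (costing w/B block transfers) multiplies the set of consistent permutations by at most M/w must use at least (V/B)·log(V/w)/log(M/w) block transfers to distinguish (V/w)! permutations. Formally: if t record-inputs suffice, then (M/w)^t ≥ (V/w)!, hence t ≥ (V/w)·log₂(V/w)/log₂(M/w) − (V/w)·log₂ e/log₂(M/w), and the I/O count is t·(w/B). -/
import Mathlib

theorem sort_large_records_lower (V w M B : ℕ) (t : ℕ)
    (hB : 0 < B) (hBw : B ≤ w) (hwM : 2 * w ≤ M) (hMV : M ≤ V) (hdvd : w ∣ V)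
    (hfan : ((Nat.factorial (V / w) : ℝ)) ≤ ((M : ℝ) / w) ^ t) :
    ((V : ℝ) / B) * (Real.logb 2 ((V : ℝ) / w) - Real.logb 2 (Real.exp 1)) /
        Real.logb 2 ((M : ℝ) / w) ≤ (t : ℝ) * ((w : ℝ) / B) := by
  have hw : 0 < w := lt_of_lt_of_le hB hBw
  have hwR : (0:ℝ) < w := by exact_mod_cast hw
  have hBR : (0:ℝ) < B := by exact_mod_cast hB
  set n := V / w with hn
  have hn2 : 2 ≤ n := (Nat.le_div_iff_mul_le hw).mpr (le_trans hwM hMV)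
  have hNcast : ((V:ℝ) / w) = (n : ℝ) := by
    rw [hn, Nat.cast_div hdvd (ne_of_gt hwR)]
  have hN2 : (2:ℝ) ≤ (n:ℝ) := by exact_mod_cast hn2
  have hNpos : (0:ℝ) < (n:ℝ) := by linarith
  have hMw2 : (2:ℝ) ≤ (M:ℝ) / w := by
    rw [le_div_iff₀ hwR]; exact_mod_cast hwM
  have hL : 0 < Real.logb 2 ((M:ℝ)/w) := Real.logb_pos one_lt_two (by linarith)
  have hfpos : (0:ℝ) < (Nat.factorial n : ℝ) := by
    exact_mod_cast Nat.factorial_pos n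
  -- fan-out bound: logb 2 (n!) ≤ t * logb 2 (M/w)
  have h1 : Real.logb 2 ((Nat.factorial n : ℝ)) ≤ (t:ℝ) * Real.logb 2 ((M:ℝ)/w) := by
    calc Real.logb 2 ((Nat.factorial n : ℝ))
        ≤ Real.logb 2 (((M:ℝ)/w) ^ t) :=
          Real.logb_le_logb_of_le one_lt_two hfpos hfan
      _ = (t:ℝ) * Real.logb 2 ((M:ℝ)/w) := Real.logb_pow 2 _ t
  -- Stirling bound: n^n ≤ e^n * n!
  have hstir : ((n:ℝ)) ^ n ≤ Real.exp 1 ^ n * (Nat.factorial n : ℝ) := by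
    have := Real.pow_div_factorial_le_exp (x := (n:ℝ)) hNpos.le n
    have hexp : Real.exp ((n:ℝ)) = Real.exp 1 ^ n := by
      rw [← Real.exp_nat_mul]; ring_nf
    rw [div_le_iff₀ hfpos, hexp] at this
    linarith
  have h2 : (n:ℝ) * Real.logb 2 ((n:ℝ)) - (n:ℝ) * Real.logb 2 (Real.exp 1)
      ≤ Real.logb 2 ((Nat.factorial n : ℝ)) := by
    have hlog := Real.logb_le_logb_of_le one_lt_two (pow_pos hNpos n) hstir
    rw [Real.logb_pow, Real.logb_mul (by positivity) (ne_of_gt hfpos),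
      Real.logb_pow] at hlog
    linarith
  have key : (n:ℝ) * (Real.logb 2 ((n:ℝ)) - Real.logb 2 (Real.exp 1))
      ≤ (t:ℝ) * Real.logb 2 ((M:ℝ)/w) := by
    nlinarith
  have hVB : (V:ℝ) / B = (n:ℝ) * ((w:ℝ)/B) := by
    rw [← hNcast]; field_simp
  rw [hVB, hNcast, div_le_iff₀ hL]
  have hwB : (0:ℝ) ≤ (w:ℝ)/B := by positivity
  calc (n:ℝ) * ((w:ℝ)/B) * (Real.logb 2 ((n:ℝ)) - Real.logb 2 (Real.exp 1))
      = ((w:ℝ)/B) * ((n:ℝ) * (Real.logb 2 ((n:ℝ)) - Real.logb 2 (Real.exp 1))) := by ring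
    _ ≤ ((w:ℝ)/B) * ((t:ℝ) * Real.logb 2 ((M:ℝ)/w)) := mul_le_mul_of_nonneg_left key hwB
    _ = (t:ℝ) * ((w:ℝ)/B) * Real.logb 2 ((M:ℝ)/w) := by ring
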